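/- arXiv:1603.03311 — 4 statements merged into one kernel-verified Lean document; each statement's English description precedes it below -/
import Mathlib

section
/- If f is a nonvanishing entire function of finite order, then there exists a polynomial P such that f(z) = exp(P(z)) for all z ∈ ℂ (Hadamard/Pólya). -/
/-!
Since `f` has no zeros and `ℂ` is simply connected, `f = exp ∘ g` for an entire `g`. Then
`Re g = log |f| ≤ log M(R, f) ≤ R ^ c` on the disc of radius `R`, for large `R`, and the
Borel–Carathéodory inequality on the disc of radius `2r` turns this one-sided bound into
`|g| = O(r ^ c)` on the circle of radius `r`. Cauchy's estimates then kill every Taylor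
coefficient of `g` of order `> c`, so `g` is a polynomial.
-/

open Filter

/-- Maximum modulus of `f` on the circle `|z| = r`. -/
noncomputable def maxMod (f : ℂ → ℂ) (r : ℝ) : ℝ :=
  sSup ((fun z => ‖f z‖) '' Metric.sphere (0 : ℂ) r)

/-- The order of an entire function, as an extended real number. -/
noncomputable def order (f : ℂ → ℂ) : EReal :=
  limsup (fun r : ℝ => ((Real.log (Real.log (maxMod f r)) / Real.log r : ℝ) : EReal)) atTop

open Metric Set Complex Topology
open scoped Nat

theorem DifferentiableOn.exists_differentiableOn_eqOn_exp_comp {U : Set ℂ}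
    (hUc : IsSimplyConnected U) (hUo : IsOpen U) {f : ℂ → ℂ} (hf : DifferentiableOn ℂ f U)
    (hU₀ : 0 ∉ f '' U) : ∃ g : ℂ → ℂ, DifferentiableOn ℂ g U ∧ EqOn (Complex.exp ∘ g) f U := by
  obtain ⟨g, hgc, hg⟩ := exists_continuousOn_eqOn_exp_comp hUc hUo hf.continuousOn hU₀
  refine ⟨g, fun z hz => ?_, hg⟩
  have hU : U ∈ 𝓝 z := hUo.mem_nhds hz
  exact (HasDerivAt.of_comp_left (hgc.continuousAt hU) (hasDerivAt_exp (g z))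
    (hf.differentiableAt hU).hasDerivAt (exp_ne_zero _)
    (hg.eventuallyEq_of_mem hU)).differentiableAt.differentiableWithinAt

theorem Differentiable.exists_eq_exp_comp {f : ℂ → ℂ} (hf : Differentiable ℂ f)
    (hf₀ : ∀ z, f z ≠ 0) : ∃ g : ℂ → ℂ, Differentiable ℂ g ∧ f = Complex.exp ∘ g := by
  have : ContractibleSpace (univ : Set ℂ) := convex_univ.contractibleSpace univ_nonempty
  obtain ⟨g, hg, hfg⟩ := hf.differentiableOn.exists_differentiableOn_eqOn_exp_comp
    (SimplyConnectedSpace.ofContractible _) isOpen_univ (by simpa using hf₀)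
  exact ⟨g, differentiableOn_univ.mp hg, funext fun z => (hfg (mem_univ z)).symm⟩

theorem norm_le_maxMod {f : ℂ → ℂ} (hf : Continuous f) (z : ℂ) : ‖f z‖ ≤ maxMod f ‖z‖ :=
  le_csSup ((isCompact_sphere 0 ‖z‖).image hf.norm).bddAbove ⟨z, by simp, rfl⟩

theorem Differentiable.norm_le_maxMod_of_norm_le {f : ℂ → ℂ} (hf : Differentiable ℂ f) {z : ℂ}
    {r : ℝ} (hz : ‖z‖ ≤ r) : ‖f z‖ ≤ maxMod f r := by
  rcases hz.eq_or_lt with rfl | hz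
  · exact norm_le_maxMod hf.continuous z
  have hr : r ≠ 0 := (hz.trans_le' (norm_nonneg z)).ne'
  refine norm_le_of_forall_mem_frontier_norm_le isBounded_ball hf.diffContOnCl (fun w hw => ?_)
    (subset_closure (mem_ball_zero_iff.mpr hz))
  rw [frontier_ball 0 hr, mem_sphere_zero_iff_norm] at hw
  exact hw ▸ norm_le_maxMod hf.continuous w

theorem eventually_log_maxMod_le_rpow {f : ℂ → ℂ} {c : ℝ} (h : order f < c) :
    ∀ᶠ r in atTop, Real.log (maxMod f r) ≤ r ^ c := by
  have hlim : ∀ᶠ r : ℝ in atTop, Real.log (Real.log (maxMod f r)) / Real.log r < c := by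
    filter_upwards [eventually_lt_of_limsup_lt h] with r hr
    exact_mod_cast hr
  filter_upwards [hlim, eventually_gt_atTop 1] with r hr hr₁
  rcases le_or_gt (Real.log (maxMod f r)) 0 with hM | hM
  · exact hM.trans (Real.rpow_nonneg (by linarith) c)
  rw [div_lt_iff₀ (Real.log_pos hr₁)] at hr
  calc Real.log (maxMod f r) = Real.exp (Real.log (Real.log (maxMod f r))) := (Real.exp_log hM).symm
    _ ≤ Real.exp (Real.log r * c) := Real.exp_le_exp.mpr (by linarith)
    _ = r ^ c := (Real.rpow_def_of_pos (by linarith) c).symm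

theorem Differentiable.exists_norm_le_rpow_of_re_le_rpow {g : ℂ → ℂ} (hg : Differentiable ℂ g)
    {c : ℝ} (hc : 0 ≤ c) (hre : ∀ᶠ R in atTop, ∀ z ∈ ball (0 : ℂ) R, (g z).re ≤ R ^ c) :
    ∃ C, ∀ᶠ r in atTop, ∀ z ∈ sphere (0 : ℂ) r, ‖g z‖ ≤ C * r ^ c := by
  have h2 : Tendsto (fun r : ℝ => 2 * r) atTop atTop := tendsto_id.const_mul_atTop two_pos
  refine ⟨2 * 2 ^ c + 3 * ‖g 0‖, ?_⟩
  filter_upwards [h2.eventually hre, eventually_ge_atTop 1] with r hr hr₁ z hz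
  have hzr : ‖z‖ = r := mem_sphere_zero_iff_norm.mp hz
  have hbc := borelCaratheodory (Real.rpow_pos_of_pos (by linarith) c) hg.differentiableOn hr
    (by linarith) (mem_ball_zero_iff.mpr (by linarith))
  rw [hzr] at hbc
  have hrc : 1 ≤ r ^ c := Real.one_le_rpow hr₁ hc
  calc ‖g z‖ ≤ 2 * (2 * r) ^ c * r / (2 * r - r) + ‖g 0‖ * (2 * r + r) / (2 * r - r) := hbc
    _ = 2 * 2 ^ c * r ^ c + 3 * ‖g 0‖ := by
      rw [Real.mul_rpow zero_le_two (by linarith)]; field_simp; ring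
    _ ≤ (2 * 2 ^ c + 3 * ‖g 0‖) * r ^ c := by nlinarith [norm_nonneg (g 0)]

theorem Differentiable.iteratedDeriv_eq_zero_of_norm_le_rpow {g : ℂ → ℂ}
    (hg : Differentiable ℂ g) {C c : ℝ}
    (hC : ∀ᶠ r in atTop, ∀ z ∈ sphere (0 : ℂ) r, ‖g z‖ ≤ C * r ^ c) {n : ℕ} (hn : c < n) :
    iteratedDeriv n g 0 = 0 := by
  have hlim : Tendsto (fun r : ℝ => n ! * C * r ^ (c - n)) atTop (𝓝 0) := by
    simpa using (tendsto_rpow_neg_atTop (sub_pos.mpr hn)).const_mul (n ! * C)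
  refine norm_le_zero_iff.mp (ge_of_tendsto hlim ?_)
  filter_upwards [hC, eventually_gt_atTop 0] with r hr hr₀
  calc ‖iteratedDeriv n g 0‖ ≤ n ! * (C * r ^ c) / r ^ n :=
        norm_iteratedDeriv_le_of_forall_mem_sphere_norm_le n hr₀ hg.diffContOnCl hr
    _ = n ! * C * r ^ (c - n) := by rw [Real.rpow_sub hr₀, Real.rpow_natCast]; ring

theorem Differentiable.exists_polynomial_of_iteratedDeriv_eq_zero {g : ℂ → ℂ}
    (hg : Differentiable ℂ g) {N : ℕ} (hN : ∀ n, N < n → iteratedDeriv n g 0 = 0) :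
    ∃ P : Polynomial ℂ, ∀ z, g z = P.eval z := by
  refine ⟨∑ k ∈ Finset.range (N + 1),
    Polynomial.C ((k ! : ℂ)⁻¹ * iteratedDeriv k g 0) * Polynomial.X ^ k, fun z => ?_⟩
  rw [← taylorSeries_eq_of_entire' 0 z hg, tsum_eq_sum (s := Finset.range (N + 1))
    fun n hn => by simp [hN n (by simpa using hn)]]
  simp [Polynomial.eval_finsetSum]

/-- A nonvanishing entire function of finite order is `exp` of a polynomial. -/
theorem nonvanishing_finite_order_eq_exp_poly (f : ℂ → ℂ)
    (hf : Differentiable ℂ f) (hnv : ∀ z, f z ≠ 0) (hord : order f < ⊤) :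
    ∃ P : Polynomial ℂ, ∀ z, f z = Complex.exp (P.eval z) := by
  obtain ⟨c, hc₀, hc⟩ : ∃ c : ℝ, 0 ≤ c ∧ order f < c := by
    obtain ⟨c, hc, -⟩ := EReal.lt_iff_exists_real_btwn.mp hord
    exact ⟨max c 0, le_max_right c 0, hc.trans_le (EReal.coe_le_coe_iff.mpr (le_max_left c 0))⟩
  obtain ⟨g, hg, rfl⟩ := hf.exists_eq_exp_comp hnv
  have hre : ∀ᶠ R in atTop, ∀ z ∈ ball (0 : ℂ) R, (g z).re ≤ R ^ c := by
    filter_upwards [eventually_log_maxMod_le_rpow hc] with R hR z hz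
    calc (g z).re = Real.log ‖Complex.exp (g z)‖ := by rw [norm_exp, Real.log_exp]
      _ ≤ Real.log (maxMod (Complex.exp ∘ g) R) :=
        Real.log_le_log (norm_pos_iff.mpr (exp_ne_zero _))
          (hf.norm_le_maxMod_of_norm_le (mem_ball_zero_iff.mp hz).le)
      _ ≤ R ^ c := hR
  obtain ⟨C, hC⟩ := hg.exists_norm_le_rpow_of_re_le_rpow hc₀ hre
  obtain ⟨P, hP⟩ := hg.exists_polynomial_of_iteratedDeriv_eq_zero (N := ⌈c⌉₊)
    fun n hn => hg.iteratedDeriv_eq_zero_of_norm_le_rpow hC (Nat.lt_of_ceil_lt hn)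
  exact ⟨P, fun z => by rw [Function.comp_apply, hP]⟩
end

section
/- Borel–Carathéodory estimate: let f be an entire function, and for r > 0 set A(r) = max_{|z|=r} Re f(z) and M(r) = max_{|z|=r} |f(z)|. Then for all 0 < r < R, M(r) ≤ (2r/(R−r))·A(R) + ((R+r)/(R−r))·|f(0)|. -/
/-!
Applying the maximum modulus principle to `exp ∘ f` shows that `Re f ≤ A(R)` on the whole
disc `|z| ≤ R`. Schwarz's lemma for `g / (2M - g)`, where `g = f - f 0` and `Re g ≤ M` on the
disc, gives `‖g z‖ ≤ 2M|z| / (R - |z|)` (Mathlib's Borel–Carathéodory theorem, which needs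
`M > 0`). Letting `M` decrease to `A(R) - Re f(0) ≥ 0` and using `-Re f(0) ≤ |f(0)|` in
`|f z| ≤ |g z| + |f 0|` gives the estimate.
-/

open Metric Set Filter Topology Bornology

/-- Maximum of `Re f` on the circle `|z| = r`. -/
noncomputable def maxRe (f : ℂ → ℂ) (r : ℝ) : ℝ :=
  sSup ((fun z => (f z).re) '' Metric.sphere (0 : ℂ) r)

namespace Complex

theorem re_le_of_forall_mem_frontier_re_le {E : Type*} [NormedAddCommGroup E]
    [NormedSpace ℂ E] [Nontrivial E] {f : E → ℂ} {U : Set E} (hU : IsBounded U)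
    (hf : DiffContOnCl ℂ f U) {C : ℝ} (hC : ∀ z ∈ frontier U, (f z).re ≤ C) {z : E} (hz : z ∈ closure U) :
    (f z).re ≤ C := by
  have hexp : ‖exp (f z)‖ ≤ Real.exp C :=
    norm_le_of_forall_mem_frontier_norm_le hU ⟨hf.differentiableOn.cexp, hf.continuousOn.cexp⟩
      (fun w hw => by simpa only [norm_exp, Real.exp_le_exp] using hC w hw) hz
  rwa [norm_exp, Real.exp_le_exp] at hexp

theorem re_le_maxRe {f : ℂ → ℂ} {R : ℝ} (hf : DiffContOnCl ℂ f (ball 0 R)) (hR : 0 < R)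
    {z : ℂ} (hz : z ∈ closedBall 0 R) : (f z).re ≤ maxRe f R := by
  have hsphere : sphere (0 : ℂ) R ⊆ closure (ball 0 R) := by
    rw [closure_ball 0 hR.ne']
    exact sphere_subset_closedBall
  have hbdd : BddAbove ((fun z => (f z).re) '' sphere (0 : ℂ) R) :=
    (isCompact_sphere 0 R).bddAbove_image
      (continuous_re.comp_continuousOn (hf.continuousOn.mono hsphere))
  refine re_le_of_forall_mem_frontier_re_le isBounded_ball hf (fun w hw => ?_)
    (by rwa [closure_ball 0 hR.ne'])
  rw [frontier_ball 0 hR.ne'] at hw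
  exact le_csSup hbdd (mem_image_of_mem _ hw)

variable {f : ℂ → ℂ} {A R : ℝ} {z : ℂ}

theorem norm_sub_apply_zero_le_of_re_le (hf : DifferentiableOn ℂ f (ball 0 R))
    (hA : MapsTo f (ball 0 R) {w | w.re ≤ A}) (hz : z ∈ ball 0 R) :
    ‖f z - f 0‖ ≤ 2 * (A - (f 0).re) * ‖z‖ / (R - ‖z‖) := by
  have hR : 0 < R := pos_of_mem_ball hz
  have hbound : ∀ M, A - (f 0).re < M → ‖f z - f 0‖ ≤ 2 * M * ‖z‖ / (R - ‖z‖) := by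
    intro M hM
    have h0 : (f 0).re ≤ A := hA (mem_ball_self hR)
    refine borelCaratheodory_zero (f := fun w => f w - f 0) (by linarith) (hf.sub_const _)
      (fun w hw => ?_) hR hz (sub_self _)
    have hw : (f w).re ≤ A := hA hw
    simp only [mem_ofPred_eq, sub_re]
    linarith
  have hcont : Continuous fun M : ℝ => 2 * M * ‖z‖ / (R - ‖z‖) := by fun_prop
  exact ge_of_tendsto (tendsto_nhdsWithin_of_tendsto_nhds hcont.continuousAt.tendsto)
    (eventually_nhdsWithin_of_forall (s := Ioi _) hbound)

theorem norm_le_of_re_le (hf : DifferentiableOn ℂ f (ball 0 R))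
    (hA : MapsTo f (ball 0 R) {w | w.re ≤ A}) (hz : z ∈ ball 0 R) :
    ‖f z‖ ≤ 2 * A * ‖z‖ / (R - ‖z‖) + ‖f 0‖ * (R + ‖z‖) / (R - ‖z‖) := by
  have hzR : 0 < R - ‖z‖ := sub_pos.2 (mem_ball_zero_iff.1 hz)
  have hre : -(f 0).re ≤ ‖f 0‖ := (neg_le_abs _).trans (abs_re_le_norm _)
  calc ‖f z‖ ≤ ‖f z - f 0‖ + ‖f 0‖ := norm_le_norm_sub_add _ _
    _ ≤ 2 * (A - (f 0).re) * ‖z‖ / (R - ‖z‖) + ‖f 0‖ := by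
      gcongr; exact norm_sub_apply_zero_le_of_re_le hf hA hz
    _ ≤ 2 * A * ‖z‖ / (R - ‖z‖) + ‖f 0‖ * (R + ‖z‖) / (R - ‖z‖) := by
      field_simp
      nlinarith [norm_nonneg z]

end Complex

/-- Borel–Carathéodory estimate. -/
theorem borel_caratheodory (f : ℂ → ℂ) (hf : Differentiable ℂ f)
    (r R : ℝ) (hr : 0 < r) (hrR : r < R) :
    maxMod f r ≤ (2 * r / (R - r)) * maxRe f R + ((R + r) / (R - r)) * ‖f 0‖ := by
  have hR : 0 < R := hr.trans hrR
  have hA : MapsTo f (ball 0 R) {w | w.re ≤ maxRe f R} := fun w hw =>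
    Complex.re_le_maxRe hf.diffContOnCl hR (ball_subset_closedBall hw)
  refine csSup_le ((NormedSpace.sphere_nonempty.2 hr.le).image _) ?_
  rintro _ ⟨z, hz, rfl⟩
  have hzr : ‖z‖ = r := mem_sphere_zero_iff_norm.1 hz
  have hzR : z ∈ ball 0 R := mem_ball_zero_iff.2 (hzr ▸ hrR)
  calc ‖f z‖ ≤ 2 * maxRe f R * r / (R - r) + ‖f 0‖ * (R + r) / (R - r) := by
        simpa only [hzr] using Complex.norm_le_of_re_le hf.differentiableOn hA hzR
    _ = (2 * r / (R - r)) * maxRe f R + ((R + r) / (R - r)) * ‖f 0‖ := by ring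
end

section
/- Boundary bumping theorem: let X be a nonempty compact connected metric space and let E be a nonempty proper subset of X. If C is a connected component of E, then the closure of C meets the boundary of E: ∂C ∩ ∂E ≠ ∅ (boundaries relative to X). -/
/-!
A point of `closure C` outside `interior E` lies in `∂C ∩ ∂E`. If there were none, normality
would give an open `W` with `closure C ⊆ W ⊆ closure W ⊆ interior E`. The component of `x` in the
compact set `closure W` is still `C`, and in a compact Hausdorff space a component lying in an
open set lies in a clopen subset of it. A clopen subset of `closure W` contained in the open set
`W` is clopen in `X`, hence all of `X`, contradicting `W ⊆ E ≠ X`.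
-/

open Set

section

variable {X : Type*} [TopologicalSpace X]

theorem closure_diff_interior_subset_frontier_inter_frontier {C E : Set X} (hCE : C ⊆ E) :
    closure C \ interior E ⊆ frontier C ∩ frontier E :=
  fun _ ⟨hpC, hpE⟩ =>
    ⟨⟨hpC, fun hp => hpE (interior_mono hCE hp)⟩, closure_mono hCE hpC, hpE⟩

theorem connectedComponentIn_eq_of_subset_of_subset {E F : Set X} {x : X}
    (hF : connectedComponentIn E x ⊆ F) (hFE : F ⊆ E) :
    connectedComponentIn F x = connectedComponentIn E x := by
  by_cases hx : x ∈ E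
  · exact (connectedComponentIn_mono x hFE).antisymm
      (isPreconnected_connectedComponentIn.subset_connectedComponentIn
        (mem_connectedComponentIn hx) hF)
  · rw [connectedComponentIn_eq_empty hx, connectedComponentIn_eq_empty (notMem_subset hFE hx)]

variable [T2Space X] [CompactSpace X]

theorem exists_isClopen_mem_subset_of_connectedComponent_subset {x : X} {U : Set X}
    (hU : IsOpen U) (h : connectedComponent x ⊆ U) : ∃ Z, IsClopen Z ∧ x ∈ Z ∧ Z ⊆ U := by
  rw [connectedComponent_eq_iInter_isClopen] at h
  obtain ⟨t, ht⟩ := hU.isClosed_compl.isCompact.elim_finite_subfamily_closed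
    (fun s : {s : Set X // IsClopen s ∧ x ∈ s} => s.1) (fun s => s.2.1.1)
    (by rwa [← disjoint_iff_inter_eq_empty, disjoint_compl_left_iff_subset])
  refine ⟨⋂ s ∈ t, s.1, isClopen_biInter_finset fun s _ => s.2.1,
    mem_iInter₂.2 fun s _ => s.2.2, ?_⟩
  rwa [← disjoint_iff_inter_eq_empty, disjoint_compl_left_iff_subset] at ht

theorem exists_isClopen_mem_subset_of_connectedComponentIn_subset {F W : Set X} {x : X}
    (hF : IsClosed F) (hW : IsOpen W) (hWF : W ⊆ F) (hx : x ∈ F)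
    (h : connectedComponentIn F x ⊆ W) : ∃ Z, IsClopen Z ∧ x ∈ Z ∧ Z ⊆ W := by
  have : CompactSpace F := isCompact_iff_compactSpace.mp hF.isCompact
  obtain ⟨Z, hZ, hxZ, hZW⟩ := exists_isClopen_mem_subset_of_connectedComponent_subset
    (hW.preimage continuous_subtype_val) (x := ⟨x, hx⟩)
    (by rw [← image_subset_iff, ← connectedComponentIn_eq_image hx]; exact h)
  obtain ⟨V, hV, rfl⟩ := isOpen_induced_iff.mp hZ.isOpen
  have hVW : (↑) '' ((↑) ⁻¹' V : Set F) = V ∩ W := by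
    rw [Subtype.image_preimage_coe]
    exact Subset.antisymm (fun p hp => ⟨hp.2, @hZW ⟨p, hp.1⟩ hp.2⟩)
      fun p hp => ⟨hWF hp.2, hp.1⟩
  refine ⟨(↑) '' ((↑) ⁻¹' V : Set F),
    ⟨hF.isClosedMap_subtype_val _ hZ.isClosed, hVW ▸ hV.inter hW⟩,
    mem_image_of_mem _ hxZ, image_subset_iff.mpr hZW⟩

end

theorem boundary_bumping_general {X : Type*} [MetricSpace X] [CompactSpace X] [ConnectedSpace X]
    (E : Set X) (hEproper : E ≠ Set.univ)
    (x : X) (hx : x ∈ E) :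
    (frontier (connectedComponentIn E x) ∩ frontier E).Nonempty := by
  set C := connectedComponentIn E x
  refine Nonempty.mono (closure_diff_interior_subset_frontier_inter_frontier
    (connectedComponentIn_subset E x)) ?_
  by_contra! hC
  obtain ⟨W, hW, hCW, hWE⟩ :=
    normal_exists_closure_subset isClosed_closure isOpen_interior (sdiff_eq_empty.mp hC)
  have hCW' : C ⊆ W := subset_closure.trans hCW
  have hcomp : connectedComponentIn (closure W) x = C :=
    connectedComponentIn_eq_of_subset_of_subset (hCW'.trans subset_closure)
      (hWE.trans interior_subset)
  obtain ⟨Z, hZ, hxZ, hZW⟩ := exists_isClopen_mem_subset_of_connectedComponentIn_subset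
    isClosed_closure hW subset_closure (subset_closure (hCW' (mem_connectedComponentIn hx)))
    (hcomp ▸ hCW')
  have hWE' : W ⊆ E := subset_closure.trans (hWE.trans interior_subset)
  exact hEproper (eq_univ_of_univ_subset (hZ.eq_univ ⟨x, hxZ⟩ ▸ hZW.trans hWE'))

/-- Boundary bumping theorem: in a nonempty compact connected metric space `X`, every
connected component `C` of a nonempty proper subset `E` satisfies `∂C ∩ ∂E ≠ ∅`. -/
theorem boundary_bumping {X : Type*} [MetricSpace X] [CompactSpace X] [ConnectedSpace X]
    [Nonempty X] (E : Set X) (hE : E.Nonempty) (hEproper : E ≠ Set.univ)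
    (x : X) (hx : x ∈ E) :
    (frontier (connectedComponentIn E x) ∩ frontier E).Nonempty :=
  boundary_bumping_general E hEproper x hx
end

section
/- The speed ordering is a total order: let F be in class B*_log and let s be an external address satisfying the head-start condition for φ. Define, for z, w in J_s(F) (points whose full orbit follows the address s), z ≻ w iff there exists K ∈ ℕ with |Re F^K(z)| > φ(|Re F^K(w)|). Then ≻ is a strict total order on J_s(F): it is irreflexive, transitive, and any two distinct points are comparable. -/
open Set Function

/-- The speed ordering is a strict total order on `J_s(F)` for an external address
satisfying the head-start condition for `φ`. -/
theorem speed_ordering_total (F : ℂ → ℂ) (J : Set ℂ) (φ : ℝ → ℝ)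
    (hφcont : Continuous φ) (hφmono : Monotone φ) (hφgt : ∀ x : ℝ, 0 ≤ x → x < φ x)
    (hHS1 : ∀ z ∈ J, ∀ w ∈ J, ∀ n : ℕ,
      φ |(F^[n] z).re| < |(F^[n] w).re| → φ |(F^[n + 1] z).re| < |(F^[n + 1] w).re|)
    (hHS2 : ∀ z ∈ J, ∀ w ∈ J, z ≠ w →
      ∃ M : ℕ, φ |(F^[M] w).re| < |(F^[M] z).re| ∨ φ |(F^[M] z).re| < |(F^[M] w).re|) :
    (∀ z ∈ J, ¬ ∃ K : ℕ, φ |(F^[K] z).re| < |(F^[K] z).re|) ∧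
    (∀ z ∈ J, ∀ w ∈ J, ∀ u ∈ J,
      (∃ K : ℕ, φ |(F^[K] w).re| < |(F^[K] z).re|) →
      (∃ K : ℕ, φ |(F^[K] u).re| < |(F^[K] w).re|) →
      (∃ K : ℕ, φ |(F^[K] u).re| < |(F^[K] z).re|)) ∧
    (∀ z ∈ J, ∀ w ∈ J, z ≠ w →
      (∃ K : ℕ, φ |(F^[K] w).re| < |(F^[K] z).re|) ∨
      (∃ K : ℕ, φ |(F^[K] z).re| < |(F^[K] w).re|)) := by
  have prop : ∀ z ∈ J, ∀ w ∈ J, ∀ K n : ℕ, K ≤ n →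
      φ |(F^[K] z).re| < |(F^[K] w).re| → φ |(F^[n] z).re| < |(F^[n] w).re| := by
    intro z hz w hw K n hKn h
    induction n with
    | zero => simpa [Nat.le_zero.mp hKn] using h
    | succ m ih =>
      rcases Nat.lt_or_ge K (m+1) with h1 | h1
      · exact hHS1 z hz w hw m (ih (Nat.lt_succ_iff.mp h1))
      · have : K = m + 1 := le_antisymm hKn h1
        simpa [this] using h
  refine ⟨?_, ?_, ?_⟩
  · rintro z hz ⟨K, hK⟩
    exact absurd hK (not_lt.mpr (le_of_lt (hφgt _ (abs_nonneg _))))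
  · rintro z hz w hw u hu ⟨K1, h1⟩ ⟨K2, h2⟩
    refine ⟨max K1 K2, ?_⟩
    have h1' := prop w hw z hz K1 (max K1 K2) (le_max_left _ _) h1
    have h2' := prop u hu w hw K2 (max K1 K2) (le_max_right _ _) h2
    calc φ |(F^[max K1 K2] u).re| < |(F^[max K1 K2] w).re| := h2'
      _ < φ |(F^[max K1 K2] w).re| := hφgt _ (abs_nonneg _)
      _ < |(F^[max K1 K2] z).re| := h1'
  · intro z hz w hw hne
    rcases hHS2 z hz w hw hne with ⟨M, h | h⟩
    · exact Or.inl ⟨M, h⟩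
    · exact Or.inr ⟨M, h⟩
end
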